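/- arXiv:1601.00514 — 3 statements merged into one kernel-verified Lean document; each statement's English description precedes it below -/
import Mathlib

section
/- P-almost surely, liminf_{n→∞} M_n/S_n = 0; that is, the ratio of the maximum to the sum of the first n traps has almost-sure liminf equal to 0. -/
open MeasureTheory ProbabilityTheory Filter

/-- The maximum of the traps `σ_1, …, σ_n` (as the supremum of a finite set). -/
noncomputable def trapMax {Ω : Type*} (σ : ℤ → Ω → ℝ) (n : ℕ) (ω : Ω) : ℝ :=
  sSup ((fun i : ℤ => σ i ω) '' Set.Icc 1 (n : ℤ))

/-- The sum of the traps `σ_1, …, σ_n`. -/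
noncomputable def trapSum {Ω : Type*} (σ : ℤ → Ω → ℝ) (n : ℕ) (ω : Ω) : ℝ :=
  ∑ i ∈ Finset.Icc (1 : ℤ) (n : ℤ), σ i ω

/-!
Fix `t ≥ 1` and cut the indices into consecutive blocks, block `k` consisting of `t` groups of
`G_k = 2^k (b_k + 1)` indices, where `b_k` is the number of indices before block `k`. With
`a_k = G_k^{1/α}` and `c_k = (4 G_k)^{1/α}`, a group has its maximum in `[a_k, c_k]` with
probability at least `1/4`, uniformly in `k`; since blocks are independent, the second
Borel–Cantelli lemma makes all `t` groups of block `k` succeed for infinitely many `k`. On the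
other hand `P(max_{i ≤ b_k} σ_i > c_k) ≤ b_k / (4 G_k) ≤ 2^{-k}`, so by the first Borel–Cantelli
lemma this happens only finitely often. When block `k` succeeds and nothing before it exceeds
`c_k`, at the end `n` of block `k` we have `M_n ≤ c_k` and `S_n ≥ t a_k`, hence
`M_n / S_n ≤ 4^{1/α} / t`.
-/

open scoped ENNReal Function Topology

theorem iIndepSet_of_measurableSet_biSup {Ω ι κ : Type*} {mΩ : MeasurableSpace Ω}
    {μ : Measure Ω} [IsProbabilityMeasure μ] {m : ι → MeasurableSpace Ω}
    (h_le : ∀ i, m i ≤ mΩ) (h_indep : iIndep m μ) {U : κ → Set ι} (hU : Pairwise (Disjoint on U))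
    {E : κ → Set Ω} (hE : ∀ k, MeasurableSet[⨆ i ∈ U k, m i] (E k)) :
    iIndepSet E μ := by
  classical
  have h_sup_le : ∀ S : Set ι, ⨆ i ∈ S, m i ≤ mΩ := fun S => iSup₂_le fun i _ => h_le i
  rw [iIndepSet_iff_meas_biInter fun k => h_sup_le _ _ (hE k)]
  intro s
  induction s using Finset.induction with
  | empty => simp
  | insert a s ha ih =>
    have h_disj : Disjoint (U a) (⋃ k ∈ (s : Set κ), U k) :=
      Set.disjoint_iUnion₂_right.2 fun k hk => hU (ne_of_mem_of_not_mem hk ha).symm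
    have h_meas : MeasurableSet[⨆ i ∈ ⋃ k ∈ (s : Set κ), U k, m i] (⋂ k ∈ s, E k) :=
      Finset.measurableSet_biInter s fun k hk =>
        (biSup_mono fun i hi => Set.mem_biUnion hk hi : ⨆ i ∈ U k, m i ≤ _) _ (hE k)
    rw [Finset.set_biInter_insert, Finset.prod_insert ha,
      (Indep_iff _ _ _).1 (indep_iSup_of_disjoint h_le h_indep h_disj) _ _ (hE a) h_meas, ih]

theorem liminf_eq_zero_of_frequently_le {u r : ℕ → ℝ} (hu : ∀ n, 0 ≤ u n)
    (hfreq : ∀ t, ∃ᶠ n in atTop, u n ≤ r t) (hr : Tendsto r atTop (𝓝 0)) :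
    liminf u atTop = 0 := by
  have h_cobdd : IsCoboundedUnder (· ≥ ·) atTop u := ⟨r 0, fun a ha =>
    let ⟨_, hn, han⟩ := ((hfreq 0).and_eventually ha).exists; han.trans hn⟩
  refine le_antisymm ?_ (le_liminf_of_le h_cobdd (Eventually.of_forall hu))
  exact ge_of_tendsto' hr fun t => liminf_le_of_frequently_le (hfreq t) (isBoundedUnder_of ⟨0, hu⟩)

theorem one_sub_inv_pow_le_half {n : ℕ} (hn : 1 ≤ n) : (1 - (n : ℝ)⁻¹) ^ n ≤ 2⁻¹ := by
  have h_exp : Real.exp (-1) ≤ 2⁻¹ := by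
    rw [Real.exp_neg, inv_le_inv₀ (Real.exp_pos 1) two_pos]
    linarith [Real.add_one_le_exp 1]
  simpa [one_div] using
    (Real.one_sub_div_pow_le_exp_neg (t := 1) (by exact_mod_cast hn)).trans h_exp

section MaxMemIcc

variable {Ω ι : Type*} {mΩ : MeasurableSpace Ω} {P : Measure Ω} [IsProbabilityMeasure P]
  {X : ι → Ω → ℝ}

def maxMemIcc (X : ι → Ω → ℝ) (s : Finset ι) (a c : ℝ) : Set Ω :=
  {ω | (∀ i ∈ s, X i ω ≤ c) ∧ ∃ i ∈ s, a ≤ X i ω}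

theorem measurableSet_maxMemIcc {m : MeasurableSpace Ω} {s : Finset ι}
    (hX : ∀ i ∈ s, Measurable[m] (X i)) (a c : ℝ) : MeasurableSet[m] (maxMemIcc X s a c) := by
  have h_eq : maxMemIcc X s a c = (⋂ i ∈ s, {ω | X i ω ≤ c}) ∩ ⋃ i ∈ s, {ω | a ≤ X i ω} := by
    ext; simp [maxMemIcc]
  rw [h_eq]
  exact (Finset.measurableSet_biInter s fun i hi =>
      measurableSet_le (hX i hi) measurable_const).inter
    (Finset.measurableSet_biUnion s fun i hi => measurableSet_le measurable_const (hX i hi))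

theorem compl_maxMemIcc_subset (s : Finset ι) (a c : ℝ) :
    (maxMemIcc X s a c)ᶜ ⊆ (⋃ i ∈ s, {ω | c < X i ω}) ∪ ⋂ i ∈ s, {ω | X i ω < a} := by
  intro ω hω
  by_contra h
  simp only [Set.mem_union, Set.mem_iUnion, Set.mem_iInter, not_or, not_exists, not_forall] at h
  obtain ⟨h_le, i, hi, hai⟩ := h
  exact hω ⟨fun j hj => not_lt.1 (h_le j hj), i, hi, not_lt.1 hai⟩

/-- With `n = #s`, the exceedances of `c` are rare enough for a union bound, while `a` is low
enough that all `X i` stay below it only with probability `(1 - 1/n)^n ≤ 1/2`. -/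
theorem le_measure_maxMemIcc (hX : ∀ i, Measurable (X i)) (hindep : iIndepFun X P)
    {s : Finset ι} (hs : s.Nonempty) {a c : ℝ}
    (hc : ∀ i ∈ s, P {ω | c < X i ω} ≤ ENNReal.ofReal (4 * s.card)⁻¹)
    (ha : ∀ i ∈ s, P {ω | X i ω < a} ≤ ENNReal.ofReal (1 - (s.card : ℝ)⁻¹)) :
    ENNReal.ofReal 4⁻¹ ≤ P (maxMemIcc X s a c) := by
  set n := s.card with hn_def
  have hn : 1 ≤ n := hs.card_pos
  have h_above : P (⋃ i ∈ s, {ω | c < X i ω}) ≤ ENNReal.ofReal 4⁻¹ :=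
    calc P (⋃ i ∈ s, {ω | c < X i ω}) ≤ ∑ i ∈ s, P {ω | c < X i ω} := measure_biUnion_finset_le _ _
      _ ≤ ∑ _i ∈ s, ENNReal.ofReal (4 * n)⁻¹ := Finset.sum_le_sum hc
      _ = ENNReal.ofReal 4⁻¹ := by
        rw [Finset.sum_const, ← hn_def, nsmul_eq_mul, ← ENNReal.ofReal_natCast,
          ← ENNReal.ofReal_mul (by positivity)]
        congr 1
        field_simp
  have h_below : P (⋂ i ∈ s, {ω | X i ω < a}) ≤ ENNReal.ofReal 2⁻¹ :=
    calc P (⋂ i ∈ s, {ω | X i ω < a}) = ∏ i ∈ s, P {ω | X i ω < a} :=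
          hindep.meas_biInter fun i _ => ⟨Set.Iio a, measurableSet_Iio, rfl⟩
      _ ≤ ∏ _i ∈ s, ENNReal.ofReal (1 - (n : ℝ)⁻¹) := Finset.prod_le_prod' ha
      _ = ENNReal.ofReal ((1 - (n : ℝ)⁻¹) ^ n) := by
        rw [Finset.prod_const, ENNReal.ofReal_pow (sub_nonneg.2 (inv_le_one_of_one_le₀
          (by exact_mod_cast hn)))]
      _ ≤ ENNReal.ofReal 2⁻¹ := ENNReal.ofReal_le_ofReal (one_sub_inv_pow_le_half hn)
  have h_compl : P (maxMemIcc X s a c)ᶜ ≤ ENNReal.ofReal (3 / 4) :=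
    calc P (maxMemIcc X s a c)ᶜ ≤ P (⋃ i ∈ s, {ω | c < X i ω}) + P (⋂ i ∈ s, {ω | X i ω < a}) :=
          (measure_mono (compl_maxMemIcc_subset s a c)).trans (measure_union_le _ _)
      _ ≤ ENNReal.ofReal 4⁻¹ + ENNReal.ofReal 2⁻¹ := add_le_add h_above h_below
      _ = ENNReal.ofReal (3 / 4) := by
        rw [← ENNReal.ofReal_add (by norm_num) (by norm_num)]; norm_num
  have h_meas := measurableSet_maxMemIcc (fun i _ => hX i) (s := s) a c
  rw [← compl_compl (maxMemIcc X s a c), prob_compl_eq_one_sub h_meas.compl]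
  calc ENNReal.ofReal 4⁻¹ = 1 - ENNReal.ofReal (3 / 4) := by
        rw [← ENNReal.ofReal_one, ← ENNReal.ofReal_sub _ (by norm_num)]; norm_num
    _ ≤ 1 - P (maxMemIcc X s a c)ᶜ := tsub_le_tsub_left h_compl 1

end MaxMemIcc

section Pareto

variable {Ω : Type*} {mΩ : MeasurableSpace Ω} {P : Measure Ω} {X Y : Ω → ℝ} {α x : ℝ}

def HasParetoTail (P : Measure Ω) (X : Ω → ℝ) (α : ℝ) : Prop :=
  ∀ u : ℝ, 1 ≤ u → P {ω | u ≤ X ω} = ENNReal.ofReal (u ^ (-α))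

theorem ProbabilityTheory.IdentDistrib.hasParetoTail (h : IdentDistrib X Y P P)
    (hY : HasParetoTail P Y α) : HasParetoTail P X α :=
  fun u hu => (h.measure_mem_eq measurableSet_Ici).trans (hY u hu)

theorem measure_rpow_inv_le_eq (hα : 0 < α) (hX : HasParetoTail P X α) (hx : 1 ≤ x) :
    P {ω | x ^ α⁻¹ ≤ X ω} = ENNReal.ofReal x⁻¹ := by
  have hx0 : 0 ≤ x := zero_le_one.trans hx
  rw [hX _ (Real.one_le_rpow hx (inv_nonneg.2 hα.le)), Real.rpow_neg (by positivity),
    Real.rpow_inv_rpow hx0 hα.ne']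

theorem measure_lt_rpow_inv_eq [IsProbabilityMeasure P] (hα : 0 < α) (hXm : Measurable X)
    (hX : HasParetoTail P X α) (hx : 1 ≤ x) :
    P {ω | X ω < x ^ α⁻¹} = ENNReal.ofReal (1 - x⁻¹) := by
  have h_compl : {ω | X ω < x ^ α⁻¹} = {ω | x ^ α⁻¹ ≤ X ω}ᶜ := by ext; simp
  rw [h_compl, prob_compl_eq_one_sub (measurableSet_le measurable_const hXm),
    measure_rpow_inv_le_eq hα hX hx, ENNReal.ofReal_sub _ (inv_nonneg.2 (zero_le_one.trans hx)),
    ENNReal.ofReal_one]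

theorem measure_rpow_inv_lt_le (hα : 0 < α) (hX : HasParetoTail P X α) (hx : 1 ≤ x) :
    P {ω | x ^ α⁻¹ < X ω} ≤ ENNReal.ofReal x⁻¹ :=
  (measure_mono (Set.ofPred_subset_ofPred.2 fun _ => le_of_lt)).trans_eq
    (measure_rpow_inv_le_eq hα hX hx)

end Pareto

section Blocks

variable (t : ℕ)

def blockStart : ℕ → ℕ
  | 0 => 0
  | k + 1 => blockStart k + t * (2 ^ k * (blockStart k + 1))

def groupSize (k : ℕ) : ℕ := 2 ^ k * (blockStart t k + 1)

def groupStart (k g : ℕ) : ℕ := blockStart t k + g * groupSize t k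

noncomputable def group (k g : ℕ) : Finset ℤ :=
  Finset.Ioc (groupStart t k g : ℤ) (groupStart t k (g + 1))

def block (k : ℕ) : Set ℤ := Set.Ioc (blockStart t k : ℤ) (blockStart t (k + 1))

variable {t}

theorem groupSize_pos (k : ℕ) : 0 < groupSize t k := by unfold groupSize; positivity

theorem groupStart_zero (k : ℕ) : groupStart t k 0 = blockStart t k := by simp [groupStart]

theorem groupStart_self (k : ℕ) : groupStart t k t = blockStart t (k + 1) := rfl

theorem monotone_blockStart : Monotone (blockStart t) :=
  monotone_nat_of_le_succ fun _ => Nat.le_add_right _ _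

theorem strictMono_blockStart (ht : 0 < t) : StrictMono (blockStart t) :=
  strictMono_nat_of_lt_succ fun k =>
    Nat.lt_add_of_pos_right (Nat.mul_pos ht (groupSize_pos (t := t) k))

theorem monotone_groupStart (k : ℕ) : Monotone fun g => (groupStart t k g : ℤ) :=
  fun _ _ h => Nat.cast_le.2 (Nat.add_le_add_left (Nat.mul_le_mul_right _ h) _)

theorem card_group (k g : ℕ) : (group t k g).card = groupSize t k := by
  simp [group, groupStart, add_mul]

theorem pairwise_disjoint_group (k : ℕ) : Pairwise (Disjoint on group t k) := fun g g' h =>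
  Finset.disjoint_coe.1 <| by
    simpa [group, Function.onFun] using (monotone_groupStart k).pairwise_disjoint_on_Ioc_succ h

theorem pairwise_disjoint_block : Pairwise (Disjoint on block t) := fun k l h => by
  simpa [block, Function.onFun] using
    ((Nat.mono_cast (α := ℤ)).comp (monotone_blockStart (t := t))).pairwise_disjoint_on_Ioc_succ h

theorem group_subset_block {k g : ℕ} (hg : g < t) : (group t k g : Set ℤ) ⊆ block t k := by
  rw [group, block, Finset.coe_Ioc, ← groupStart_self, ← groupStart_zero]
  exact Set.Ioc_subset_Ioc (monotone_groupStart k (Nat.zero_le g))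
    (monotone_groupStart k (Nat.succ_le_of_lt hg))

theorem exists_mem_group_of_mem_block {k : ℕ} {i : ℤ} (hi : i ∈ block t k) :
    ∃ g < t, i ∈ group t k g := by
  have h_cover := (monotone_groupStart (t := t) k).biUnion_Ico_Ioc_map_succ 0 t
  rw [block, ← groupStart_self, ← groupStart_zero, ← h_cover] at hi
  obtain ⟨g, h_lt, hg, h_le⟩ := by simpa using hi
  exact ⟨g, hg, by simpa [group] using ⟨h_lt, h_le⟩⟩

end Blocks

section Events

variable {Ω : Type*} {mΩ : MeasurableSpace Ω} {P : Measure Ω} {σ : ℤ → Ω → ℝ} {α : ℝ} {t : ℕ}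

noncomputable def lowerLevel (α : ℝ) (t k : ℕ) : ℝ := (groupSize t k : ℝ) ^ α⁻¹

noncomputable def upperLevel (α : ℝ) (t k : ℕ) : ℝ := (4 * groupSize t k : ℝ) ^ α⁻¹

def goodBlock (σ : ℤ → Ω → ℝ) (α : ℝ) (t k : ℕ) : Set Ω :=
  ⋂ g ∈ Finset.range t, maxMemIcc σ (group t k g) (lowerLevel α t k) (upperLevel α t k)

def badPrefix (σ : ℤ → Ω → ℝ) (α : ℝ) (t k : ℕ) : Set Ω :=
  ⋃ i ∈ Finset.Icc (1 : ℤ) (blockStart t k), {ω | upperLevel α t k < σ i ω}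

theorem upperLevel_eq_mul_lowerLevel (α : ℝ) (t k : ℕ) :
    upperLevel α t k = 4 ^ α⁻¹ * lowerLevel α t k :=
  Real.mul_rpow (by norm_num) (Nat.cast_nonneg _)

theorem lowerLevel_pos (α : ℝ) (t k : ℕ) : 0 < lowerLevel α t k :=
  Real.rpow_pos_of_pos (Nat.cast_pos.2 (groupSize_pos k)) _

theorem measurable_of_mem_biSup {S : Set ℤ} {i : ℤ} (hi : i ∈ S) :
    Measurable[⨆ j ∈ S, MeasurableSpace.comap (σ j) inferInstance] (σ i) :=
  measurable_iff_comap_le.2 <|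
    le_iSup₂ (f := fun j (_ : j ∈ S) => MeasurableSpace.comap (σ j) inferInstance) i hi

theorem measurableSet_goodBlock_biSup (k : ℕ) :
    MeasurableSet[⨆ i ∈ block t k, MeasurableSpace.comap (σ i) inferInstance]
      (goodBlock σ α t k) :=
  Finset.measurableSet_biInter _ fun _ hg => measurableSet_maxMemIcc
    (fun _ hi => measurable_of_mem_biSup (group_subset_block (Finset.mem_range.1 hg) hi)) _ _

theorem iIndepSet_goodBlock [IsProbabilityMeasure P] (hσ : ∀ i, Measurable (σ i))
    (hindep : iIndepFun σ P) :
    iIndepSet (goodBlock σ α t) P :=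
  iIndepSet_of_measurableSet_biSup (fun i => (hσ i).comap_le) hindep.iIndep
    pairwise_disjoint_block measurableSet_goodBlock_biSup

theorem measure_goodBlock_ge [IsProbabilityMeasure P] (hα : 0 < α) (hσ : ∀ i, Measurable (σ i))
    (hindep : iIndepFun σ P) (hpareto : ∀ i, HasParetoTail P (σ i) α) (k : ℕ) :
    ENNReal.ofReal 4⁻¹ ^ t ≤ P (goodBlock σ α t k) := by
  have h_indep : iIndepSet (fun g => maxMemIcc σ (group t k g) (lowerLevel α t k)
      (upperLevel α t k)) P :=
    iIndepSet_of_measurableSet_biSup (fun i => (hσ i).comap_le) hindep.iIndep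
      (U := fun g => (group t k g : Set ℤ))
      (fun g g' h => Finset.disjoint_coe.2 (pairwise_disjoint_group k h))
      fun g => measurableSet_maxMemIcc (fun _ hi => measurable_of_mem_biSup hi) _ _
  have hG : (1 : ℝ) ≤ groupSize t k := by exact_mod_cast groupSize_pos k
  have h_group : ∀ g, ENNReal.ofReal 4⁻¹ ≤
      P (maxMemIcc σ (group t k g) (lowerLevel α t k) (upperLevel α t k)) := fun g =>
    le_measure_maxMemIcc hσ hindep (Finset.card_pos.1 (card_group k g ▸ groupSize_pos k))
      (fun i _ => by
        rw [card_group, upperLevel]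
        exact measure_rpow_inv_lt_le hα (hpareto i) (by linarith))
      (fun i _ => by
        rw [card_group]
        exact (measure_lt_rpow_inv_eq hα (hσ i) (hpareto i) hG).le)
  calc ENNReal.ofReal 4⁻¹ ^ t = ∏ _g ∈ Finset.range t, ENNReal.ofReal 4⁻¹ := by simp
    _ ≤ ∏ g ∈ Finset.range t, P (maxMemIcc σ (group t k g) (lowerLevel α t k)
          (upperLevel α t k)) := Finset.prod_le_prod' fun g _ => h_group g
    _ = P (goodBlock σ α t k) := (h_indep.meas_biInter _).symm

theorem measure_badPrefix_le (hα : 0 < α) (hpareto : ∀ i, HasParetoTail P (σ i) α) (k : ℕ) :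
    P (badPrefix σ α t k) ≤ ENNReal.ofReal (2⁻¹ ^ k) := by
  set b := blockStart t k
  have h4G : (1 : ℝ) ≤ 4 * groupSize t k := by
    have : (1 : ℝ) ≤ groupSize t k := by exact_mod_cast groupSize_pos k
    linarith
  calc P (badPrefix σ α t k)
      ≤ ∑ i ∈ Finset.Icc (1 : ℤ) b, P {ω | upperLevel α t k < σ i ω} :=
        measure_biUnion_finset_le _ _
    _ ≤ ∑ _i ∈ Finset.Icc (1 : ℤ) b, ENNReal.ofReal (4 * groupSize t k : ℝ)⁻¹ :=
        Finset.sum_le_sum fun i _ => measure_rpow_inv_lt_le hα (hpareto i) h4G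
    _ = ENNReal.ofReal (b * (4 * (2 ^ k * (b + 1)) : ℝ)⁻¹) := by
        rw [Finset.sum_const, nsmul_eq_mul, ← ENNReal.ofReal_natCast,
          ← ENNReal.ofReal_mul (by positivity)]
        simp [groupSize, b]
    _ ≤ ENNReal.ofReal (2⁻¹ ^ k) := by
        refine ENNReal.ofReal_le_ofReal ?_
        rw [inv_pow, ← div_eq_mul_inv, div_le_iff₀ (by positivity)]
        have : (0 : ℝ) < 2 ^ k := by positivity
        field_simp
        nlinarith

end Events

section BorelCantelli

variable {Ω : Type*} {mΩ : MeasurableSpace Ω} {P : Measure Ω} {σ : ℤ → Ω → ℝ} {α : ℝ} {t : ℕ}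

theorem ae_frequently_mem_goodBlock [IsProbabilityMeasure P] (hα : 0 < α)
    (hσ : ∀ i, Measurable (σ i)) (hindep : iIndepFun σ P)
    (hpareto : ∀ i, HasParetoTail P (σ i) α) :
    ∀ᵐ ω ∂P, ∃ᶠ k in atTop, ω ∈ goodBlock σ α t k := by
  have h_meas : ∀ k, MeasurableSet (goodBlock σ α t k) := fun k =>
    iSup₂_le (fun i _ => (hσ i).comap_le) _ (measurableSet_goodBlock_biSup k)
  have h_sum : ∑' k, P (goodBlock σ α t k) = ∞ := eq_top_iff.2 <|
    calc ∞ = ∑' _k : ℕ, ENNReal.ofReal 4⁻¹ ^ t :=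
          (ENNReal.tsum_const_eq_top_of_ne_zero (by simp)).symm
      _ ≤ ∑' k, P (goodBlock σ α t k) :=
          ENNReal.tsum_le_tsum (measure_goodBlock_ge hα hσ hindep hpareto)
  have h_limsup := measure_limsup_eq_one h_meas (iIndepSet_goodBlock hσ hindep) h_sum
  filter_upwards [(ae_mem_iff_measure_eq
    (MeasurableSet.measurableSet_limsup h_meas).nullMeasurableSet).2
    (h_limsup.trans measure_univ.symm)] with ω hω using mem_limsup_iff_frequently_mem.1 hω

theorem ae_eventually_notMem_badPrefix (hα : 0 < α) (hpareto : ∀ i, HasParetoTail P (σ i) α) :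
    ∀ᵐ ω ∂P, ∀ᶠ k in atTop, ω ∉ badPrefix σ α t k := by
  refine ae_eventually_notMem
    (ne_top_of_le_ne_top (ENNReal.ofReal_ne_top (r := ∑' k : ℕ, (2 : ℝ)⁻¹ ^ k)) ?_)
  rw [ENNReal.ofReal_tsum_of_nonneg (fun k => by positivity)
    (summable_geometric_of_lt_one (by norm_num) (by norm_num : (2 : ℝ)⁻¹ < 1))]
  exact ENNReal.tsum_le_tsum (measure_badPrefix_le hα hpareto)

theorem ae_forall_one_le [IsProbabilityMeasure P] (hσ : ∀ i, Measurable (σ i))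
    (hpareto : ∀ i, HasParetoTail P (σ i) α) :
    ∀ᵐ ω ∂P, ∀ i, 1 ≤ σ i ω :=
  ae_all_iff.2 fun i =>
    (ae_iff_measure_eq (measurableSet_le measurable_const (hσ i)).nullMeasurableSet).2
    (by rw [hpareto i 1 le_rfl, measure_univ]; simp)

end BorelCantelli

section Traps

variable {Ω : Type*} {σ : ℤ → Ω → ℝ} {ω : Ω} {n : ℕ}

theorem trapMax_nonneg (hσ : ∀ i, 0 ≤ σ i ω) (n : ℕ) : 0 ≤ trapMax σ n ω :=
  Real.sSup_nonneg (by rintro _ ⟨i, -, rfl⟩; exact hσ i)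

theorem trapSum_nonneg (hσ : ∀ i, 0 ≤ σ i ω) (n : ℕ) : 0 ≤ trapSum σ n ω :=
  Finset.sum_nonneg fun i _ => hσ i

theorem trapMax_le {c : ℝ} (hc : 0 ≤ c) (h : ∀ i ∈ Finset.Icc (1 : ℤ) n, σ i ω ≤ c) :
    trapMax σ n ω ≤ c :=
  Real.sSup_le (by rintro _ ⟨i, hi, rfl⟩; exact h i (Finset.mem_Icc.2 hi)) hc

theorem le_trapSum {U : ℕ → Finset ℤ} {t : ℕ} {a : ℝ} (hσ : ∀ i, 0 ≤ σ i ω)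
    (hU : Pairwise (Disjoint on U)) (hsub : ∀ g < t, U g ⊆ Finset.Icc 1 n)
    (ha : ∀ g < t, ∃ i ∈ U g, a ≤ σ i ω) :
    t * a ≤ trapSum σ n ω := by
  classical
  calc (t : ℝ) * a = ∑ _g ∈ Finset.range t, a := by simp
    _ ≤ ∑ g ∈ Finset.range t, ∑ i ∈ U g, σ i ω := Finset.sum_le_sum fun g hg => by
        obtain ⟨i, hi, hai⟩ := ha g (Finset.mem_range.1 hg)
        exact hai.trans (Finset.single_le_sum (fun j _ => hσ j) hi)
    _ = ∑ i ∈ (Finset.range t).biUnion U, σ i ω := (Finset.sum_biUnion (hU.set_pairwise _)).symm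
    _ ≤ trapSum σ n ω := Finset.sum_le_sum_of_subset_of_nonneg
        (Finset.biUnion_subset.2 fun g hg => hsub g (Finset.mem_range.1 hg)) fun i _ _ => hσ i

theorem trapMax_div_trapSum_le {α : ℝ} {t k : ℕ} (ht : 0 < t) (hσ : ∀ i, 0 ≤ σ i ω)
    (hgood : ω ∈ goodBlock σ α t k) (hbad : ω ∉ badPrefix σ α t k) :
    trapMax σ (blockStart t (k + 1)) ω / trapSum σ (blockStart t (k + 1)) ω ≤ 4 ^ α⁻¹ / t := by
  simp only [goodBlock, Set.mem_iInter, Finset.mem_range] at hgood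
  simp only [badPrefix, Set.mem_iUnion, not_exists] at hbad
  have h_max : ∀ i ∈ Finset.Icc (1 : ℤ) (blockStart t (k + 1)), σ i ω ≤ upperLevel α t k := by
    intro i hi
    rw [Finset.mem_Icc] at hi
    by_cases h_prefix : i ≤ blockStart t k
    · exact not_lt.1 (hbad i (Finset.mem_Icc.2 ⟨hi.1, h_prefix⟩))
    · obtain ⟨g, hg, hig⟩ := exists_mem_group_of_mem_block (t := t) ⟨not_le.1 h_prefix, hi.2⟩
      exact (hgood g hg).1 i hig
  have h_sum : t * lowerLevel α t k ≤ trapSum σ (blockStart t (k + 1)) ω :=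
    le_trapSum hσ (pairwise_disjoint_group k)
      (fun g hg i hi => by
        have hi := group_subset_block hg hi
        exact Finset.mem_Icc.2 ⟨by have := hi.1; omega, hi.2⟩)
      fun g hg => (hgood g hg).2
  have h_pos : 0 < (t : ℝ) * lowerLevel α t k :=
    mul_pos (by exact_mod_cast ht) (lowerLevel_pos α t k)
  calc _ ≤ upperLevel α t k / (t * lowerLevel α t k) :=
        div_le_div₀ (by unfold upperLevel; positivity)
          (trapMax_le (by unfold upperLevel; positivity) h_max) h_pos h_sum
    _ = 4 ^ α⁻¹ / t := by
        rw [upperLevel_eq_mul_lowerLevel]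
        field_simp [(lowerLevel_pos α t k).ne']

end Traps

theorem ae_frequently_trapMax_div_trapSum_le {Ω : Type*} {mΩ : MeasurableSpace Ω}
    {P : Measure Ω} [IsProbabilityMeasure P] {σ : ℤ → Ω → ℝ} {α : ℝ} {t : ℕ} (hα : 0 < α)
    (hσ : ∀ i, Measurable (σ i)) (hindep : iIndepFun σ P)
    (hpareto : ∀ i, HasParetoTail P (σ i) α) (ht : 0 < t) :
    ∀ᵐ ω ∂P, ∃ᶠ n in atTop, trapMax σ n ω / trapSum σ n ω ≤ 4 ^ α⁻¹ / t := by
  filter_upwards [ae_forall_one_le hσ hpareto,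
    ae_frequently_mem_goodBlock (t := t) hα hσ hindep hpareto,
    ae_eventually_notMem_badPrefix (t := t) hα hpareto] with ω h_one h_good h_bad
  have h_end : Tendsto (fun k => blockStart t (k + 1)) atTop atTop :=
    (strictMono_blockStart ht).tendsto_atTop.comp (tendsto_add_atTop_nat 1)
  exact h_end.frequently <| (h_good.and_eventually h_bad).mono fun k hk =>
    trapMax_div_trapSum_le ht (fun i => zero_le_one.trans (h_one i)) hk.1 hk.2

/-- **Statement 0.** For i.i.d. traps with `P(σ_0 ≥ u) = u^{-α}` (`u ≥ 1`, `α ∈ (0,1]`),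
`P`-almost surely `liminf_{n→∞} M_n / S_n = 0`. -/
theorem liminf_max_div_sum_eq_zero
    {Ω : Type*} [MeasurableSpace Ω] (P : Measure Ω) [IsProbabilityMeasure P]
    (α : ℝ) (hα : α ∈ Set.Ioc (0 : ℝ) 1)
    (σ : ℤ → Ω → ℝ) (hmeas : ∀ i, Measurable (σ i))
    (hindep : iIndepFun σ P)
    (hident : ∀ i, IdentDistrib (σ i) (σ 0) P P)
    (htail : ∀ u : ℝ, 1 ≤ u → P {ω | u ≤ σ 0 ω} = ENNReal.ofReal (u ^ (-α))) :
    ∀ᵐ ω ∂P,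
      Filter.liminf (fun n : ℕ => trapMax σ n ω / trapSum σ n ω) Filter.atTop = 0 := by
  have hpareto : ∀ i, HasParetoTail P (σ i) α := fun i => (hident i).hasParetoTail htail
  have h_freq : ∀ᵐ ω ∂P, ∀ t : ℕ,
      ∃ᶠ n in atTop, trapMax σ n ω / trapSum σ n ω ≤ 4 ^ α⁻¹ / (t + 1 : ℕ) :=
    ae_all_iff.2 fun t =>
      ae_frequently_trapMax_div_trapSum_le hα.1 hmeas hindep hpareto t.succ_pos
  filter_upwards [ae_forall_one_le hmeas hpareto, h_freq] with ω h_one h_freq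
  have h_nonneg : ∀ i, 0 ≤ σ i ω := fun i => zero_le_one.trans (h_one i)
  exact liminf_eq_zero_of_frequently_le
    (fun n => div_nonneg (trapMax_nonneg h_nonneg n) (trapSum_nonneg h_nonneg n)) h_freq
    ((tendsto_const_div_atTop_nhds_zero_nat _).comp (tendsto_add_atTop_nat 1))
end

section
/- As θ → 0+, the Laplace transform of σ_0 satisfies 1 − E(e^{−θσ_0}) ~ c_α θ^α ℓ_α(θ^{−1}), where c_α := Γ(1−α) if α ∈ (0,1) and c_α := 1 if α = 1; that is, the ratio (1 − E(e^{−θσ_0})) / (c_α θ^α ℓ_α(θ^{−1})) tends to 1 as θ → 0+. -/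
/-!
By the layer-cake formula, `1 - E e^{-θσ₀} = ∫_0^∞ θ e^{-θt} P(σ₀ ≥ t) dt`. Inserting the Pareto
tail `P(σ₀ ≥ t) = min 1 t^{-α}` and substituting `u = θt` turns this into
`(1 - e^{-θ}) + θ^α Γ(1 - α, θ)`, with the upper incomplete gamma function `Γ(s, x)`.
The first term is at most `θ = o(θ^α ℓ_α(θ⁻¹))`. For `α < 1`, `Γ(1 - α, θ) → Γ(1 - α)` by dominated
convergence; for `α = 1`, comparing `e^{-u}/u` with `1/u` and `1/u - 1` on `(θ, 1]` gives
`Γ(0, θ) = log θ⁻¹ + O(1)`.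
-/

open MeasureTheory ProbabilityTheory Filter

/-- The logarithmic correction `ℓ_α(u)`: equal to `1` for `α ∈ (0,1)` and `log u` for `α = 1`. -/
noncomputable def ell (α u : ℝ) : ℝ := if α = 1 then Real.log u else 1

/-- The constant `c_α`: equal to `Γ(1-α)` for `α ∈ (0,1)` and `1` for `α = 1`. -/
noncomputable def cConst (α : ℝ) : ℝ := if α = 1 then 1 else Real.Gamma (1 - α)

open Set Real
open scoped Topology

theorem integral_mul_exp_neg_mul (θ x : ℝ) :
    ∫ t in (0 : ℝ)..x, θ * exp (-θ * t) = 1 - exp (-θ * x) := by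
  have hderiv : ∀ t ∈ uIcc 0 x, HasDerivAt (fun t => -exp (-θ * t)) (θ * exp (-θ * t)) t :=
    fun t _ => (((hasDerivAt_id t).const_mul (-θ)).exp).neg.congr_deriv (by simp; ring)
  rw [intervalIntegral.integral_eq_sub_of_hasDerivAt hderiv
    (Continuous.intervalIntegrable (by fun_prop) _ _)]
  simp only [mul_zero, exp_zero]
  ring

theorem measurable_measureReal_setOf_le {Ω : Type*} [MeasurableSpace Ω] (μ : Measure Ω)
    [IsFiniteMeasure μ] (X : Ω → ℝ) : Measurable fun t => μ.real {ω | t ≤ X ω} :=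
  Antitone.measurable fun _ _ hst => measureReal_mono fun _ hω => hst.trans hω

theorem one_sub_integral_exp_neg_mul_eq_integral_tail {Ω : Type*} [MeasurableSpace Ω]
    (P : Measure Ω) [IsProbabilityMeasure P] {X : Ω → ℝ} (hX : AEMeasurable X P)
    (hX₀ : 0 ≤ᵐ[P] X) {θ : ℝ} (hθ : 0 ≤ θ) :
    1 - ∫ ω, exp (-θ * X ω) ∂P = ∫ t in Ioi 0, θ * exp (-θ * t) * P.real {ω | t ≤ X ω} := by
  have layercake := lintegral_comp_eq_lintegral_meas_le_mul P hX₀ hX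
    (g := fun t => θ * exp (-θ * t)) (fun _ _ => Continuous.intervalIntegrable (by fun_prop) _ _)
    (ae_of_all _ fun t => by positivity)
  simp only [integral_mul_exp_neg_mul] at layercake
  have hexp_le : ∀ᵐ ω ∂P, exp (-θ * X ω) ≤ 1 := hX₀.mono fun ω hω =>
    exp_le_one_iff.2 (by have := mul_nonneg hθ hω; linarith)
  have hint : Integrable (fun ω => exp (-θ * X ω)) P :=
    (integrable_const 1).mono' (by fun_prop) (hexp_le.mono fun ω hω => by
      rwa [norm_of_nonneg (exp_pos _).le])
  have htail_meas := measurable_measureReal_setOf_le P X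
  have hsub : 1 - ∫ ω, exp (-θ * X ω) ∂P = ∫ ω, (1 - exp (-θ * X ω)) ∂P := by
    rw [integral_sub (integrable_const 1) hint, integral_const, probReal_univ, one_smul]
  rw [hsub, integral_eq_lintegral_of_nonneg_ae
      (hexp_le.mono fun ω hω => sub_nonneg.2 hω) (by fun_prop),
    integral_eq_lintegral_of_nonneg_ae (ae_of_all _ fun t => by positivity) (by fun_prop),
    layercake]
  congr 1
  refine lintegral_congr fun t => ?_
  rw [ENNReal.ofReal_mul (by positivity : 0 ≤ θ * exp (-θ * t)), ofReal_measureReal, mul_comm]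

noncomputable def upperIncompleteGamma (s x : ℝ) : ℝ := ∫ u in Ioi x, exp (-u) * u ^ (s - 1)

theorem integral_Ioi_exp_neg_mul_mul_rpow {θ a : ℝ} (hθ : 0 < θ) (ha : 0 ≤ a) (s : ℝ) :
    ∫ t in Ioi a, exp (-θ * t) * t ^ (s - 1) = θ ^ (-s) * upperIncompleteGamma s (θ * a) := by
  have hpow : θ ^ (-s) * θ * θ ^ (s - 1) = 1 := by
    rw [← rpow_add_one hθ.ne', ← rpow_add hθ, show -s + 1 + (s - 1) = 0 by ring, rpow_zero]
  rw [upperIncompleteGamma, ← integral_comp_mul_left_Ioi' _ a hθ, smul_eq_mul, ← mul_assoc,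
    ← integral_const_mul]
  refine setIntegral_congr_fun measurableSet_Ioi fun t ht => ?_
  rw [mul_rpow hθ.le (ha.trans_lt ht).le, neg_mul]
  linear_combination (exp (-(θ * t)) * t ^ (s - 1)) * hpow.symm

section ParetoTail

variable {Ω : Type*} [MeasurableSpace Ω] {P : Measure Ω} [IsProbabilityMeasure P] {α : ℝ}
  {σ₀ : Ω → ℝ}

theorem measureReal_le_eq_one_of_le_one
    (htail : ∀ u : ℝ, 1 ≤ u → P {ω | u ≤ σ₀ ω} = ENNReal.ofReal (u ^ (-α))) {t : ℝ}
    (ht : t ≤ 1) : P.real {ω | t ≤ σ₀ ω} = 1 := by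
  refine le_antisymm measureReal_le_one (le_of_eq_of_le ?_
    (measureReal_mono (s₁ := {ω | 1 ≤ σ₀ ω}) fun ω hω => ht.trans hω))
  rw [measureReal_def, htail 1 le_rfl, one_rpow, ENNReal.ofReal_one, ENNReal.toReal_one]

theorem ae_nonneg_of_tail (hmeas : Measurable σ₀)
    (htail : ∀ u : ℝ, 1 ≤ u → P {ω | u ≤ σ₀ ω} = ENNReal.ofReal (u ^ (-α))) :
    0 ≤ᵐ[P] σ₀ := by
  have hone : ∀ᵐ ω ∂P, 1 ≤ σ₀ ω := by
    rw [ae_iff_prob_eq_one (measurableSet_setOfPred.1 (measurableSet_le measurable_const hmeas))]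
    rw [htail 1 le_rfl, one_rpow, ENNReal.ofReal_one]
  exact hone.mono fun ω hω => zero_le_one.trans hω

theorem integral_Ioi_mul_exp_neg_mul_measureReal_le
    (htail : ∀ u : ℝ, 1 ≤ u → P {ω | u ≤ σ₀ ω} = ENNReal.ofReal (u ^ (-α))) {θ : ℝ}
    (hθ : 0 < θ) :
    ∫ t in Ioi 0, θ * exp (-θ * t) * P.real {ω | t ≤ σ₀ ω}
      = (1 - exp (-θ)) + θ ^ α * upperIncompleteGamma (1 - α) θ := by
  have htail_meas := measurable_measureReal_setOf_le P σ₀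
  have hint : IntegrableOn (fun t => θ * exp (-θ * t) * P.real {ω | t ≤ σ₀ ω}) (Ioi 0) := by
    refine ((exp_neg_integrableOn_Ioi 0 hθ).const_mul θ).mono' (by fun_prop)
      (ae_of_all _ fun t => ?_)
    rw [norm_of_nonneg (by positivity)]
    exact mul_le_of_le_one_right (by positivity) measureReal_le_one
  rw [← Ioc_union_Ioi_eq_Ioi zero_le_one, setIntegral_union Ioc_disjoint_Ioi_same measurableSet_Ioi
    (hint.mono_set Ioc_subset_Ioi_self) (hint.mono_set (Ioi_subset_Ioi zero_le_one))]
  congr 1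
  · rw [setIntegral_congr_fun measurableSet_Ioc fun t ht => by
        rw [measureReal_le_eq_one_of_le_one htail ht.2, mul_one],
      ← intervalIntegral.integral_of_le zero_le_one, integral_mul_exp_neg_mul, mul_one]
  · rw [setIntegral_congr_fun measurableSet_Ioi
        (g := fun t => θ * (exp (-θ * t) * t ^ ((1 - α) - 1))) fun t ht => by
          rw [measureReal_def, htail t (le_of_lt ht), ENNReal.toReal_ofReal
            (rpow_nonneg (zero_le_one.trans (le_of_lt ht)) _),
            show (1 - α) - 1 = -α by ring, mul_assoc],
      integral_const_mul, integral_Ioi_exp_neg_mul_mul_rpow hθ zero_le_one, mul_one, ← mul_assoc,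
      show θ * θ ^ (-(1 - α)) = θ ^ α by
        rw [rpow_neg hθ.le, rpow_sub hθ, rpow_one]; field_simp]

theorem one_sub_integral_exp_neg_mul_eq_of_tail (hmeas : Measurable σ₀)
    (htail : ∀ u : ℝ, 1 ≤ u → P {ω | u ≤ σ₀ ω} = ENNReal.ofReal (u ^ (-α))) {θ : ℝ}
    (hθ : 0 < θ) :
    1 - ∫ ω, exp (-θ * σ₀ ω) ∂P = (1 - exp (-θ)) + θ ^ α * upperIncompleteGamma (1 - α) θ := by
  rw [one_sub_integral_exp_neg_mul_eq_integral_tail P hmeas.aemeasurable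
    (ae_nonneg_of_tail hmeas htail) hθ.le, integral_Ioi_mul_exp_neg_mul_measureReal_le htail hθ]

end ParetoTail

theorem tendsto_setIntegral_Ioi_nhdsGT {E : Type*} [NormedAddCommGroup E] [NormedSpace ℝ E]
    {f : ℝ → E} {a : ℝ} (hf : IntegrableOn f (Ioi a)) :
    Tendsto (fun x => ∫ t in Ioi x, f t) (𝓝[>] a) (𝓝 (∫ t in Ioi a, f t)) := by
  have hindicator : ∀ᶠ x in 𝓝[>] a, ∫ t in Ioi a, (Ioi x).indicator f t = ∫ t in Ioi x, f t := by
    filter_upwards [self_mem_nhdsWithin] with x hx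
    rw [setIntegral_indicator measurableSet_Ioi, inter_eq_right.2 (Ioi_subset_Ioi (le_of_lt hx))]
  refine Tendsto.congr' hindicator (tendsto_integral_filter_of_dominated_convergence (‖f ·‖)
    (Eventually.of_forall fun x => hf.aestronglyMeasurable.indicator measurableSet_Ioi)
    (Eventually.of_forall fun x => ae_of_all _ fun t => norm_indicator_le_norm_self f t)
    hf.norm ?_)
  filter_upwards [ae_restrict_mem measurableSet_Ioi] with t ht
  refine tendsto_const_nhds.congr' ?_
  filter_upwards [Ioo_mem_nhdsGT ht] with x hx
  exact (indicator_of_mem hx.2 f).symm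

theorem tendsto_upperIncompleteGamma_nhdsGT_zero {s : ℝ} (hs : 0 < s) :
    Tendsto (upperIncompleteGamma s) (𝓝[>] 0) (𝓝 (Gamma s)) := by
  rw [Gamma_eq_integral hs]
  exact tendsto_setIntegral_Ioi_nhdsGT (GammaIntegral_convergent hs)

theorem tendsto_log_inv_nhdsGT_zero : Tendsto (fun x : ℝ => log x⁻¹) (𝓝[>] 0) atTop :=
  tendsto_log_atTop.comp tendsto_inv_nhdsGT_zero

theorem upperIncompleteGamma_zero (x : ℝ) :
    upperIncompleteGamma 0 x = ∫ u in Ioi x, exp (-u) / u := by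
  simp only [upperIncompleteGamma, zero_sub, rpow_neg_one, div_eq_mul_inv]

theorem integrableOn_exp_neg_div_Ioi {x : ℝ} (hx : 0 < x) :
    IntegrableOn (fun u => exp (-u) / u) (Ioi x) := by
  refine ((integrableOn_exp_neg_Ioi x).div_const x).mono'
    (measurable_neg.exp.div measurable_id).aestronglyMeasurable ?_
  filter_upwards [ae_restrict_mem measurableSet_Ioi] with u hu
  rw [norm_of_nonneg (div_nonneg (exp_pos _).le (hx.trans hu).le)]
  exact div_le_div_of_nonneg_left (exp_pos _).le hx hu.le

theorem integral_Ioi_one_exp_neg_div_mem_Icc :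
    ∫ u in Ioi 1, exp (-u) / u ∈ Icc (0 : ℝ) 1 := by
  refine ⟨setIntegral_nonneg measurableSet_Ioi fun u hu =>
    div_nonneg (exp_pos _).le (zero_le_one.trans hu.le), ?_⟩
  calc ∫ u in Ioi 1, exp (-u) / u ≤ ∫ u in Ioi 1, exp (-u) :=
        setIntegral_mono_on (integrableOn_exp_neg_div_Ioi one_pos) (integrableOn_exp_neg_Ioi 1)
          measurableSet_Ioi fun u hu => div_le_self (exp_pos _).le (le_of_lt hu)
    _ = exp (-1) := integral_exp_neg_Ioi 1
    _ ≤ 1 := exp_le_one_iff.2 (by norm_num)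

theorem intervalIntegral_exp_neg_div_mem_Icc {x : ℝ} (hx₀ : 0 < x) (hx₁ : x ≤ 1) :
    ∫ u in x..1, exp (-u) / u ∈ Icc (log x⁻¹ - 1) (log x⁻¹) := by
  have hcont : ContinuousOn (fun u : ℝ => u⁻¹) (uIcc x 1) :=
    continuousOn_inv₀.mono fun u hu => by
      rw [uIcc_of_le hx₁] at hu; exact (hx₀.trans_le hu.1).ne'
  have hlog : ∫ u in x..1, u⁻¹ = log x⁻¹ := by rw [integral_inv_of_pos hx₀ one_pos, one_div]
  have hint : IntervalIntegrable (fun u => exp (-u) / u) volume x 1 := by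
    simp_rw [div_eq_mul_inv]; exact (ContinuousOn.mul (by fun_prop) hcont).intervalIntegrable
  constructor
  · calc log x⁻¹ - 1 ≤ ∫ u in x..1, (u⁻¹ - 1) := by
          rw [intervalIntegral.integral_sub hcont.intervalIntegrable intervalIntegrable_const,
            hlog, intervalIntegral.integral_const, smul_eq_mul, mul_one]
          linarith
      _ ≤ ∫ u in x..1, exp (-u) / u := by
          refine intervalIntegral.integral_mono_on hx₁
            (hcont.intervalIntegrable.sub intervalIntegrable_const) hint fun u hu => ?_
          have hu₀ : 0 < u := hx₀.trans_le hu.1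
          rw [show u⁻¹ - 1 = (1 - u) / u by field_simp]
          exact div_le_div_of_nonneg_right (by linarith [add_one_le_exp (-u)]) hu₀.le
  · calc ∫ u in x..1, exp (-u) / u ≤ ∫ u in x..1, u⁻¹ :=
          intervalIntegral.integral_mono_on hx₁ hint hcont.intervalIntegrable fun u hu => by
            have hu₀ : 0 < u := hx₀.trans_le hu.1
            rw [← one_div]
            exact div_le_div_of_nonneg_right (exp_le_one_iff.2 (by linarith)) hu₀.le
      _ = log x⁻¹ := hlog

theorem abs_upperIncompleteGamma_zero_sub_log_le {x : ℝ} (hx₀ : 0 < x) (hx₁ : x ≤ 1) :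
    |upperIncompleteGamma 0 x - log x⁻¹| ≤ 1 := by
  have hint := integrableOn_exp_neg_div_Ioi hx₀
  have hsplit : upperIncompleteGamma 0 x
      = (∫ u in x..1, exp (-u) / u) + ∫ u in Ioi 1, exp (-u) / u := by
    rw [upperIncompleteGamma_zero, intervalIntegral.integral_of_le hx₁,
      ← setIntegral_union Ioc_disjoint_Ioi_same measurableSet_Ioi
        (hint.mono_set Ioc_subset_Ioi_self) (hint.mono_set (Ioi_subset_Ioi hx₁)),
      Ioc_union_Ioi_eq_Ioi hx₁]
  obtain ⟨hlow, hhigh⟩ := intervalIntegral_exp_neg_div_mem_Icc hx₀ hx₁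
  obtain ⟨htail₀, htail₁⟩ := integral_Ioi_one_exp_neg_div_mem_Icc
  rw [hsplit, abs_le]
  constructor <;> linarith

theorem tendsto_upperIncompleteGamma_zero_div_log :
    Tendsto (fun x => upperIncompleteGamma 0 x / log x⁻¹) (𝓝[>] 0) (𝓝 1) := by
  have hlog := tendsto_log_inv_nhdsGT_zero
  have hsmall : Tendsto (fun x => (upperIncompleteGamma 0 x - log x⁻¹) / log x⁻¹)
      (𝓝[>] 0) (𝓝 0) := by
    refine tendsto_zero_iff_norm_tendsto_zero.2 (squeeze_zero' (Eventually.of_forall fun _ =>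
      norm_nonneg _) ?_ hlog.inv_tendsto_atTop)
    filter_upwards [Ioo_mem_nhdsGT one_pos, hlog.eventually_gt_atTop 0] with x hx hpos
    rw [Pi.inv_apply, norm_div, norm_of_nonneg hpos.le, Real.norm_eq_abs, inv_eq_one_div (log x⁻¹)]
    exact div_le_div_of_nonneg_right (abs_upperIncompleteGamma_zero_sub_log_le hx.1 hx.2.le)
      hpos.le
  have hsum := hsmall.add_const 1
  rw [zero_add] at hsum
  refine hsum.congr' ?_
  filter_upwards [hlog.eventually_gt_atTop 0] with x hpos
  rw [sub_div, div_self hpos.ne', sub_add_cancel]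

theorem tendsto_one_sub_exp_neg_add_rpow_mul_div {α : ℝ} {g D : ℝ → ℝ}
    (hD : ∀ᶠ θ in 𝓝[>] 0, 0 < D θ)
    (hpow : Tendsto (fun θ => θ ^ (1 - α) / D θ) (𝓝[>] 0) (𝓝 0))
    (hg : Tendsto (fun θ => g θ / D θ) (𝓝[>] 0) (𝓝 1)) :
    Tendsto (fun θ => ((1 - exp (-θ)) + θ ^ α * g θ) / (θ ^ α * D θ)) (𝓝[>] 0) (𝓝 1) := by
  have hexp : Tendsto (fun θ => (1 - exp (-θ)) / (θ ^ α * D θ)) (𝓝[>] 0) (𝓝 0) := by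
    refine squeeze_zero' ?_ ?_ hpow
    · filter_upwards [self_mem_nhdsWithin, hD] with θ (hθ : 0 < θ) hDθ
      have : exp (-θ) ≤ 1 := exp_le_one_iff.2 (neg_nonpos.2 hθ.le)
      exact div_nonneg (sub_nonneg.2 this) (mul_pos (rpow_pos_of_pos hθ α) hDθ).le
    · filter_upwards [self_mem_nhdsWithin, hD] with θ (hθ : 0 < θ) hDθ
      calc (1 - exp (-θ)) / (θ ^ α * D θ) ≤ θ / (θ ^ α * D θ) :=
            div_le_div_of_nonneg_right (by linarith [add_one_le_exp (-θ)])
              (mul_pos (rpow_pos_of_pos hθ α) hDθ).le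
        _ = θ ^ (1 - α) / D θ := by rw [rpow_sub hθ, rpow_one, div_div]
  have hsum := hexp.add hg
  rw [zero_add] at hsum
  refine hsum.congr' ?_
  filter_upwards [self_mem_nhdsWithin, hD] with θ (hθ : 0 < θ) hDθ
  have : θ ^ α ≠ 0 := (rpow_pos_of_pos hθ α).ne'
  field_simp

theorem tendsto_one_sub_exp_neg_add_upperIncompleteGamma_div {α : ℝ} (hα : α ∈ Ioc 0 1) :
    Tendsto (fun θ => ((1 - exp (-θ)) + θ ^ α * upperIncompleteGamma (1 - α) θ)
      / (cConst α * θ ^ α * ell α θ⁻¹)) (𝓝[>] 0) (𝓝 1) := by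
  rcases hα.2.lt_or_eq with hlt | rfl
  · have hΓ : 0 < Gamma (1 - α) := Gamma_pos_of_pos (sub_pos.2 hlt)
    simp only [cConst, ell, if_neg hlt.ne, mul_one, mul_comm (Gamma (1 - α))]
    refine tendsto_one_sub_exp_neg_add_rpow_mul_div (D := fun _ => Gamma (1 - α))
      (Eventually.of_forall fun _ => hΓ) ?_ ?_
    · have hpow := (continuousAt_rpow_const 0 (1 - α) (Or.inr (sub_pos.2 hlt).le)).tendsto
      rw [zero_rpow (sub_pos.2 hlt).ne'] at hpow
      simpa using (hpow.mono_left nhdsWithin_le_nhds).div_const (Gamma (1 - α))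
    · simpa [div_self hΓ.ne'] using
        (tendsto_upperIncompleteGamma_nhdsGT_zero (sub_pos.2 hlt)).div_const (Gamma (1 - α))
  · simp only [cConst, ell, if_true, one_mul, sub_self]
    refine tendsto_one_sub_exp_neg_add_rpow_mul_div (D := fun θ => log θ⁻¹) ?_ ?_
      tendsto_upperIncompleteGamma_zero_div_log
    · filter_upwards [Ioo_mem_nhdsGT one_pos] with θ hθ
      exact log_pos ((one_lt_inv₀ hθ.1).2 hθ.2)
    · refine tendsto_log_inv_nhdsGT_zero.inv_tendsto_atTop.congr fun θ => ?_
      simp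

/-- As `θ → 0+`, `1 - E(e^{-θ σ_0}) ∼ c_α θ^α ℓ_α(θ⁻¹)`, i.e. the ratio
`(1 - E(e^{-θ σ_0})) / (c_α θ^α ℓ_α(θ⁻¹))` tends to `1`. -/
theorem laplace_transform_asymptotics
    {Ω : Type*} [MeasurableSpace Ω] (P : Measure Ω) [IsProbabilityMeasure P]
    (α : ℝ) (hα : α ∈ Set.Ioc (0 : ℝ) 1)
    (σ₀ : Ω → ℝ) (hmeas : Measurable σ₀)
    (htail : ∀ u : ℝ, 1 ≤ u → P {ω | u ≤ σ₀ ω} = ENNReal.ofReal (u ^ (-α))) :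
    Filter.Tendsto
      (fun θ : ℝ =>
        (1 - ∫ ω, Real.exp (-θ * σ₀ ω) ∂P) / (cConst α * θ ^ α * ell α θ⁻¹))
      (nhdsWithin 0 (Set.Ioi 0)) (nhds 1) := by
  refine (tendsto_one_sub_exp_neg_add_upperIncompleteGamma_div hα).congr' ?_
  filter_upwards [self_mem_nhdsWithin] with θ hθ
  rw [one_sub_integral_exp_neg_mul_eq_of_tail hmeas htail hθ]
end

section
/- P-almost surely, for all sufficiently large n the event B_n := { S̄_{b_{n−1}} < a_n^{1/α} ℓ_α(a_n) } holds; that is, eventually the two-sided sum of the traps over [−b_{n−1}, b_{n−1}] is less than a_n^{1/α} ℓ_α(a_n). -/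
open MeasureTheory ProbabilityTheory Filter

/-- The scale `a_n := ⌊e^{2 n log n}⌋`. -/
noncomputable def aseq (n : ℕ) : ℕ := ⌊Real.exp (2 * n * Real.log n)⌋₊

/-- The scale `b_n := ⌈ε⁻¹ a_n⌉`. -/
noncomputable def bseq (ε : ℝ) (n : ℕ) : ℕ := ⌈ε⁻¹ * (aseq n : ℝ)⌉₊

/-- The two-sided sum `S̄_n := Σ_{i = -n}^{n} σ_i`. -/
noncomputable def trapSumTwoSided {Ω : Type*} (σ : ℤ → Ω → ℝ) (n : ℕ) (ω : Ω) : ℝ :=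
  ∑ i ∈ Finset.Icc (-(n : ℤ)) (n : ℤ), σ i ω

open Set
open scoped ENNReal

/-!
A union bound over the indices where one trap reaches the level `t`, and Markov's inequality
for the sum of the traps truncated at `t`, give `P(S̄_k ≥ t) ≤ (2k+1) (t^{-α} + E[σ ∧ t] / t)`.
For `t = a_n^{1/α} ℓ_α(a_n)` the bracket is `O(1 / a_n)`, and since `a_n = n^{2n}` while
`b_{n-1} = O(a_{n-1})`, the complement of `B_n` has probability `O(a_{n-1} / a_n) = O(n^{-2})`.
This is summable, so Borel–Cantelli concludes.
-/

theorem ENNReal.ofReal_sum_le {ι : Type*} (s : Finset ι) (f : ι → ℝ) :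
    ENNReal.ofReal (∑ i ∈ s, f i) ≤ ∑ i ∈ s, ENNReal.ofReal (f i) := by
  classical
  induction s using Finset.induction with
  | empty => simp
  | insert _ _ hi ih =>
    rw [Finset.sum_insert hi, Finset.sum_insert hi]
    exact ENNReal.ofReal_add_le.trans (by gcongr)

theorem measure_le_sum_le_sum_add_lintegral_min_div {Ω ι : Type*} [MeasurableSpace Ω]
    (μ : Measure Ω) (s : Finset ι) {X : ι → Ω → ℝ}
    (hX : ∀ i, Measurable (X i)) {t : ℝ} (ht : 0 < t) :
    μ {ω | t ≤ ∑ i ∈ s, X i ω} ≤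
      ∑ i ∈ s, μ {ω | t ≤ X i ω} +
        (∑ i ∈ s, ∫⁻ ω, ENNReal.ofReal (min (X i ω) t) ∂μ) / ENNReal.ofReal t := by
  set T : Ω → ℝ≥0∞ := fun ω ↦ ∑ i ∈ s, ENNReal.ofReal (min (X i ω) t)
  have hT : Measurable T := by fun_prop
  have hcover : {ω | t ≤ ∑ i ∈ s, X i ω} ⊆
      (⋃ i ∈ s, {ω | t ≤ X i ω}) ∪ {ω | ENNReal.ofReal t ≤ T ω} := by
    intro ω hω
    by_cases hlarge : ∃ i ∈ s, t ≤ X i ω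
    · obtain ⟨i, hi, hit⟩ := hlarge
      exact Or.inl (mem_biUnion hi hit)
    · push Not at hlarge
      refine Or.inr ((ENNReal.ofReal_le_ofReal hω).trans
        ((ENNReal.ofReal_sum_le _ _).trans_eq ?_))
      exact Finset.sum_congr rfl fun i hi ↦ by rw [min_eq_left (hlarge i hi).le]
  calc μ {ω | t ≤ ∑ i ∈ s, X i ω}
      ≤ μ (⋃ i ∈ s, {ω | t ≤ X i ω}) + μ {ω | ENNReal.ofReal t ≤ T ω} :=
        (measure_mono hcover).trans (measure_union_le _ _)
    _ ≤ ∑ i ∈ s, μ {ω | t ≤ X i ω} + (∫⁻ ω, T ω ∂μ) / ENNReal.ofReal t :=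
        add_le_add (measure_biUnion_finset_le _ _)
          (meas_ge_le_lintegral_div hT.aemeasurable (by simpa using ht) ENNReal.ofReal_ne_top)
    _ = _ := by rw [lintegral_finsetSum _ fun i _ ↦ by fun_prop]

theorem integral_rpow_neg_nonneg {α t : ℝ} (ht : 1 ≤ t) : 0 ≤ ∫ u in (1 : ℝ)..t, u ^ (-α) :=
  intervalIntegral.integral_nonneg ht fun _ hu ↦ Real.rpow_nonneg (zero_le_one.trans hu.1) _

-- `t ^ (-α)` is the tail `P(σ ≥ t)` and `1 + ∫₁ᵗ u ^ (-α) du` the layer-cake bound on `E[σ ∧ t]`.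
noncomputable def truncatedTailBound (α t : ℝ) : ℝ :=
  t ^ (-α) + (1 + ∫ u in (1 : ℝ)..t, u ^ (-α)) / t

section ParetoTail

variable {Ω : Type*} [MeasurableSpace Ω] {μ : Measure Ω} [IsProbabilityMeasure μ] {α : ℝ}
  {X : Ω → ℝ}

theorem ae_one_le_of_measure_le_eq_rpow (hX : Measurable X)
    (htail : ∀ u : ℝ, 1 ≤ u → μ {ω | u ≤ X ω} = ENNReal.ofReal (u ^ (-α))) :
    ∀ᵐ ω ∂μ, 1 ≤ X ω := by
  rw [ae_iff_measure_eq (measurableSet_le measurable_const hX).nullMeasurableSet, htail 1 le_rfl]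
  simp

theorem lintegral_ofReal_min_le_of_measure_le_eq_rpow (hX : Measurable X)
    (htail : ∀ u : ℝ, 1 ≤ u → μ {ω | u ≤ X ω} = ENNReal.ofReal (u ^ (-α))) {t : ℝ} (ht : 1 ≤ t) :
    ∫⁻ ω, ENNReal.ofReal (min (X ω) t) ∂μ ≤ ENNReal.ofReal (1 + ∫ u in (1 : ℝ)..t, u ^ (-α)) := by
  have hnonneg : 0 ≤ᵐ[μ] fun ω ↦ min (X ω) t := by
    filter_upwards [ae_one_le_of_measure_le_eq_rpow hX htail] with ω hω
    exact le_min (zero_le_one.trans hω) (zero_le_one.trans ht)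
  have hint : IntegrableOn (fun u : ℝ ↦ u ^ (-α)) (Ioc 1 t) :=
    (intervalIntegrable_iff_integrableOn_Ioc_of_le ht).1 <|
      intervalIntegral.intervalIntegrable_rpow
        (Or.inr (notMem_uIcc_of_lt one_pos (one_pos.trans_le ht)))
  have hsplit : Ioi (0 : ℝ) = (Ioc 0 1 ∪ Ioc 1 t) ∪ Ioi t := by
    rw [Ioc_union_Ioc_eq_Ioc zero_le_one ht, Ioc_union_Ioi_eq_Ioi (zero_le_one.trans ht)]
  have hlow : ∫⁻ u in Ioc (0 : ℝ) 1, μ {ω | u ≤ min (X ω) t} ≤ 1 :=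
    (lintegral_mono fun _ ↦ prob_le_one).trans (by simp)
  have hmid : ∫⁻ u in Ioc 1 t, μ {ω | u ≤ min (X ω) t} ≤
      ENNReal.ofReal (∫ u in (1 : ℝ)..t, u ^ (-α)) := by
    rw [intervalIntegral.integral_of_le ht, ofReal_integral_eq_lintegral_ofReal hint
      (ae_restrict_of_forall_mem measurableSet_Ioc fun u hu ↦
        Real.rpow_nonneg (zero_le_one.trans hu.1.le) _)]
    refine setLIntegral_mono (by fun_prop) fun u hu ↦ ?_
    rw [← htail u hu.1.le]
    exact measure_mono fun ω (hω : u ≤ min (X ω) t) ↦ hω.trans (min_le_left _ _)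
  have hhigh : ∫⁻ u in Ioi t, μ {ω | u ≤ min (X ω) t} = 0 :=
    setLIntegral_eq_zero measurableSet_Ioi fun u hu ↦ by
      simp [not_le.2 (show t < u from hu)]
  rw [lintegral_eq_lintegral_meas_le μ hnonneg (by fun_prop), hsplit,
    lintegral_union measurableSet_Ioi
      ((Ioc_disjoint_Ioi ht).union_left (Ioc_disjoint_Ioi le_rfl)),
    lintegral_union measurableSet_Ioc (Ioc_disjoint_Ioc_of_le le_rfl), hhigh, add_zero,
    ENNReal.ofReal_add zero_le_one (integral_rpow_neg_nonneg ht), ENNReal.ofReal_one]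
  exact add_le_add hlow hmid

theorem measure_le_sum_le_ofReal_card_mul_truncatedTailBound {ι : Type*} {σ : ι → Ω → ℝ}
    (hσ : ∀ i, Measurable (σ i))
    (htail : ∀ i, ∀ u : ℝ, 1 ≤ u → μ {ω | u ≤ σ i ω} = ENNReal.ofReal (u ^ (-α)))
    (s : Finset ι) {t : ℝ} (ht : 1 ≤ t) :
    μ {ω | t ≤ ∑ i ∈ s, σ i ω} ≤ ENNReal.ofReal (s.card * truncatedTailBound α t) := by
  have ht0 : 0 < t := one_pos.trans_le ht
  have hI : 0 ≤ 1 + ∫ u in (1 : ℝ)..t, u ^ (-α) :=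
    add_nonneg zero_le_one (integral_rpow_neg_nonneg ht)
  calc μ {ω | t ≤ ∑ i ∈ s, σ i ω}
      ≤ ∑ i ∈ s, μ {ω | t ≤ σ i ω} +
          (∑ i ∈ s, ∫⁻ ω, ENNReal.ofReal (min (σ i ω) t) ∂μ) / ENNReal.ofReal t :=
        measure_le_sum_le_sum_add_lintegral_min_div μ s hσ ht0
    _ ≤ ∑ _i ∈ s, ENNReal.ofReal (t ^ (-α)) +
          (∑ _i ∈ s, ENNReal.ofReal (1 + ∫ u in (1 : ℝ)..t, u ^ (-α))) / ENNReal.ofReal t := by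
        gcongr with i
        · exact (htail i t ht).le
        · exact lintegral_ofReal_min_le_of_measure_le_eq_rpow (hσ i) (htail i) ht
    _ = ENNReal.ofReal (s.card * truncatedTailBound α t) := by
        rw [Finset.sum_const, Finset.sum_const, nsmul_eq_mul, nsmul_eq_mul, mul_div_assoc,
          ← mul_add, ENNReal.ofReal_mul (Nat.cast_nonneg _), ENNReal.ofReal_natCast,
          truncatedTailBound,
          ENNReal.ofReal_add (Real.rpow_nonneg ht0.le _) (div_nonneg hI ht0.le),
          ENNReal.ofReal_div_of_pos ht0]

end ParetoTail

theorem truncatedTailBound_rpow_inv_le {α a : ℝ} (hα0 : 0 < α) (hα1 : α < 1) (ha : 1 ≤ a) :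
    truncatedTailBound α (a ^ (1 / α)) ≤ (1 + (1 - α)⁻¹) / a := by
  set t := a ^ (1 / α)
  have ha0 : 0 < a := one_pos.trans_le ha
  have ht0 : 0 < t := Real.rpow_pos_of_pos ha0 _
  have hc : 0 < 1 - α := sub_pos.2 hα1
  have hta : t ^ (-α) = a⁻¹ := by
    rw [← Real.rpow_mul ha0.le, div_mul_eq_mul_div, one_mul, neg_div_self hα0.ne',
      Real.rpow_neg_one]
  have hpow : t ^ (1 - α) = t * a⁻¹ := by
    rw [sub_eq_add_neg, Real.rpow_add ht0, Real.rpow_one, hta]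
  have hint : ∫ u in (1 : ℝ)..t, u ^ (-α) = (t ^ (1 - α) - 1) / (1 - α) := by
    rw [integral_rpow (Or.inl (by linarith)), Real.one_rpow, neg_add_eq_sub]
  have hnum : 1 + (t ^ (1 - α) - 1) / (1 - α) ≤ t * a⁻¹ / (1 - α) := by
    rw [← hpow, one_add_div hc.ne', div_le_div_iff_of_pos_right hc]
    linarith
  calc truncatedTailBound α t
      ≤ a⁻¹ + t * a⁻¹ / (1 - α) / t := by
        rw [truncatedTailBound, hint, hta]; gcongr
    _ = (1 + (1 - α)⁻¹) / a := by field_simp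

theorem Real.one_le_log_of_three_le {a : ℝ} (ha : 3 ≤ a) : 1 ≤ Real.log a := by
  rw [Real.le_log_iff_exp_le (by linarith)]
  linarith [Real.exp_one_lt_d9]

theorem truncatedTailBound_mul_log_le {a : ℝ} (ha : 3 ≤ a) :
    truncatedTailBound 1 (a * Real.log a) ≤ 3 / a := by
  have ha0 : 0 < a := by linarith
  have hL := Real.one_le_log_of_three_le ha
  have ht0 : 0 < a * Real.log a := by positivity
  have hint : ∫ u in (1 : ℝ)..a * Real.log a, u ^ (-1 : ℝ) = Real.log (a * Real.log a) := by
    simp only [Real.rpow_neg_one]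
    rw [integral_inv_of_pos one_pos ht0, div_one]
  have hlog : 1 + Real.log (a * Real.log a) ≤ 2 * Real.log a := by
    rw [Real.log_mul ha0.ne' (by positivity)]
    linarith [Real.log_le_sub_one_of_pos (one_pos.trans_le hL)]
  calc truncatedTailBound 1 (a * Real.log a)
      ≤ (a * Real.log a)⁻¹ + 2 * Real.log a / (a * Real.log a) := by
        rw [truncatedTailBound, hint, Real.rpow_neg_one]; gcongr
    _ = (a * Real.log a)⁻¹ + 2 / a := by rw [mul_div_mul_right 2 a (by positivity)]
    _ ≤ a⁻¹ + 2 / a := by gcongr; nlinarith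
    _ = 3 / a := by ring

theorem exists_truncatedTailBound_threshold_le {α : ℝ} (hα : α ∈ Ioc 0 1) :
    ∃ C, 0 ≤ C ∧ ∀ a : ℝ, 3 ≤ a →
      1 ≤ a ^ (1 / α) * ell α a ∧ truncatedTailBound α (a ^ (1 / α) * ell α a) ≤ C / a := by
  obtain ⟨hα0, hα1⟩ := hα
  rcases hα1.eq_or_lt with rfl | hlt
  · refine ⟨3, by norm_num, fun a ha ↦ ?_⟩
    have hL := Real.one_le_log_of_three_le ha
    simp only [ell, if_true, div_one, Real.rpow_one]
    exact ⟨by nlinarith, truncatedTailBound_mul_log_le ha⟩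
  · refine ⟨1 + (1 - α)⁻¹, by have := sub_pos.2 hlt; positivity, fun a ha ↦ ?_⟩
    simp only [ell, hlt.ne, if_false, mul_one]
    exact ⟨Real.one_le_rpow (by linarith) (by positivity),
      truncatedTailBound_rpow_inv_le hα0 hlt (by linarith)⟩

theorem aseq_eq (n : ℕ) : aseq n = n ^ (2 * n) := by
  have hexp : Real.exp (2 * n * Real.log n) = ((n ^ (2 * n) : ℕ) : ℝ) := by
    rcases n.eq_zero_or_pos with rfl | hn
    · simp
    · rw [show 2 * (n : ℝ) * Real.log n = ((2 * n : ℕ) : ℝ) * Real.log n by push_cast; ring,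
        Real.exp_nat_mul, Real.exp_log (by exact_mod_cast hn)]
      push_cast; rfl
  rw [aseq, hexp, Nat.floor_natCast]

theorem one_le_aseq (n : ℕ) : 1 ≤ aseq n := by
  rw [aseq_eq]
  rcases n with _ | n
  · simp
  · exact Nat.one_le_pow _ _ n.succ_pos

theorem three_le_aseq {n : ℕ} (hn : 2 ≤ n) : 3 ≤ aseq n := by
  rw [aseq_eq]
  calc 3 ≤ n ^ 2 := by nlinarith
    _ ≤ n ^ (2 * n) := Nat.pow_le_pow_right (by omega) (by omega)

theorem aseq_pred_mul_sq_le (n : ℕ) : aseq (n - 1) * n ^ 2 ≤ aseq n := by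
  rcases n with _ | m
  · simp
  · rw [aseq_eq, aseq_eq, Nat.add_sub_cancel, show 2 * (m + 1) = 2 * m + 2 by ring, pow_add]
    gcongr
    omega

theorem two_mul_bseq_add_one_le {ε : ℝ} (hε : 0 < ε) (m : ℕ) :
    2 * (bseq ε m : ℝ) + 1 ≤ (2 * ε⁻¹ + 3) * aseq m := by
  have ha : (1 : ℝ) ≤ aseq m := by exact_mod_cast one_le_aseq m
  have hb : (bseq ε m : ℝ) < ε⁻¹ * aseq m + 1 := Nat.ceil_lt_add_one (by positivity)
  nlinarith

theorem two_mul_bseq_pred_add_one_div_aseq_le {ε : ℝ} (hε : 0 < ε) {n : ℕ} (hn : 1 ≤ n) :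
    (2 * (bseq ε (n - 1) : ℝ) + 1) / aseq n ≤ (2 * ε⁻¹ + 3) / n ^ 2 := by
  have ha : (0 : ℝ) < aseq n := by exact_mod_cast one_le_aseq n
  have hn : (0 : ℝ) < n := by exact_mod_cast hn
  rw [div_le_div_iff₀ ha (by positivity)]
  calc (2 * (bseq ε (n - 1) : ℝ) + 1) * n ^ 2
      ≤ (2 * ε⁻¹ + 3) * aseq (n - 1) * n ^ 2 := by
        gcongr; exact two_mul_bseq_add_one_le hε _
    _ ≤ (2 * ε⁻¹ + 3) * aseq n := by
        rw [mul_assoc]; gcongr; exact_mod_cast aseq_pred_mul_sq_le n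

theorem ae_eventually_notMem_of_measure_le_div_sq {X : Type*} [MeasurableSpace X]
    {μ : Measure X} [IsFiniteMeasure μ] {s : ℕ → Set X} {C : ℝ}
    (h : ∀ᶠ n : ℕ in atTop, μ (s n) ≤ ENNReal.ofReal (C / n ^ 2)) :
    ∀ᵐ x ∂μ, ∀ᶠ n in atTop, x ∉ s n := by
  have hsum : Summable fun n : ℕ ↦ (μ (s n)).toReal := by
    refine ((Real.summable_one_div_nat_pow.2 one_lt_two).mul_left |C|)
      |>.of_norm_bounded_eventually_nat ?_
    filter_upwards [h] with n hn
    rw [Real.norm_of_nonneg ENNReal.toReal_nonneg, mul_one_div]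
    refine ENNReal.toReal_le_of_le_ofReal (by positivity) (hn.trans ?_)
    gcongr
    exact le_abs_self C
  refine ae_eventually_notMem ?_
  rw [tsum_congr fun n ↦ (ENNReal.ofReal_toReal (measure_ne_top μ (s n))).symm,
    ← ENNReal.ofReal_tsum_of_nonneg (fun _ ↦ ENNReal.toReal_nonneg) hsum]
  exact ENNReal.ofReal_ne_top

theorem exists_measure_threshold_le_trapSumTwoSided_le {Ω : Type*} [MeasurableSpace Ω]
    {P : Measure Ω} [IsProbabilityMeasure P] {α ε : ℝ} (hα : α ∈ Ioc 0 1) (hε : 0 < ε)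
    {σ : ℤ → Ω → ℝ} (hσ : ∀ i, Measurable (σ i))
    (htail : ∀ i, ∀ u : ℝ, 1 ≤ u → P {ω | u ≤ σ i ω} = ENNReal.ofReal (u ^ (-α))) :
    ∃ C, ∀ n ≥ 2,
      P {ω | (aseq n : ℝ) ^ (1 / α) * ell α (aseq n) ≤ trapSumTwoSided σ (bseq ε (n - 1)) ω} ≤
        ENNReal.ofReal (C / n ^ 2) := by
  obtain ⟨C, hC, hthreshold⟩ := exists_truncatedTailBound_threshold_le hα
  refine ⟨C * (2 * ε⁻¹ + 3), fun n hn ↦ ?_⟩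
  set k := bseq ε (n - 1)
  obtain ⟨hthreshold_one, hbound⟩ := hthreshold (aseq n) (by exact_mod_cast three_le_aseq hn)
  have hcard : (Finset.Icc (-(k : ℤ)) k).card = 2 * k + 1 := by
    rw [Int.card_Icc]; omega
  refine (measure_le_sum_le_ofReal_card_mul_truncatedTailBound hσ htail _
    hthreshold_one).trans (ENNReal.ofReal_le_ofReal ?_)
  rw [hcard]
  push_cast
  calc (2 * k + 1 : ℝ) * truncatedTailBound α ((aseq n : ℝ) ^ (1 / α) * ell α (aseq n))
      ≤ (2 * k + 1) * (C / aseq n) := by gcongr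
    _ = C * ((2 * k + 1) / aseq n) := by ring
    _ ≤ C * ((2 * ε⁻¹ + 3) / n ^ 2) :=
      mul_le_mul_of_nonneg_left (two_mul_bseq_pred_add_one_div_aseq_le hε (by omega)) hC
    _ = C * (2 * ε⁻¹ + 3) / n ^ 2 := by ring

theorem eventB_eventually_general
    {Ω : Type*} [MeasurableSpace Ω] (P : Measure Ω) [IsProbabilityMeasure P]
    (α : ℝ) (hα : α ∈ Set.Ioc (0 : ℝ) 1) (ε : ℝ) (hε : ε ∈ Set.Ioo (0 : ℝ) 1)
    (σ : ℤ → Ω → ℝ) (hmeas : ∀ i, Measurable (σ i))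
    (hident : ∀ i, IdentDistrib (σ i) (σ 0) P P)
    (htail : ∀ u : ℝ, 1 ≤ u → P {ω | u ≤ σ 0 ω} = ENNReal.ofReal (u ^ (-α))) :
    ∀ᵐ ω ∂P, ∀ᶠ n : ℕ in Filter.atTop,
      trapSumTwoSided σ (bseq ε (n - 1)) ω < (aseq n : ℝ) ^ (1 / α) * ell α (aseq n) := by
  have htail_i (i : ℤ) (u : ℝ) (hu : 1 ≤ u) : P {ω | u ≤ σ i ω} = ENNReal.ofReal (u ^ (-α)) :=
    ((hident i).measure_mem_eq measurableSet_Ici).trans (htail u hu)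
  obtain ⟨C, hC⟩ := exists_measure_threshold_le_trapSumTwoSided_le hα hε.1 hmeas htail_i
  filter_upwards [ae_eventually_notMem_of_measure_le_div_sq (eventually_atTop.2 ⟨2, hC⟩)]
    with ω hω
  exact hω.mono fun n hn ↦ not_le.1 hn

/-- `P`-almost surely, the events
`B_n = {S̄_{b_{n-1}} < a_n^{1/α} ℓ_α(a_n)}` hold for all sufficiently large `n`. -/
theorem eventB_eventually
    {Ω : Type*} [MeasurableSpace Ω] (P : Measure Ω) [IsProbabilityMeasure P]
    (α : ℝ) (hα : α ∈ Set.Ioc (0 : ℝ) 1) (ε : ℝ) (hε : ε ∈ Set.Ioo (0 : ℝ) 1)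
    (σ : ℤ → Ω → ℝ) (hmeas : ∀ i, Measurable (σ i))
    (hindep : iIndepFun σ P)
    (hident : ∀ i, IdentDistrib (σ i) (σ 0) P P)
    (htail : ∀ u : ℝ, 1 ≤ u → P {ω | u ≤ σ 0 ω} = ENNReal.ofReal (u ^ (-α))) :
    ∀ᵐ ω ∂P, ∀ᶠ n : ℕ in Filter.atTop,
      trapSumTwoSided σ (bseq ε (n - 1)) ω < (aseq n : ℝ) ^ (1 / α) * ell α (aseq n) :=
  eventB_eventually_general P α hα ε hε σ hmeas hident htail
end
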